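/- Let R be a commutative ring, let k ≥ 1 and n ≥ k be natural numbers, let x : Fin k → R be a family of k elements such that the elementary symmetric functions e_i(x) vanish for all 1 ≤ i ≤ k−1, set v := e_k(x) = ∏_{i} x i, and assume additionally that the power sums p_m(x) = ∑_i (x i)^m vanish for all m with k < m ≤ n. Then for every finite type κ and every family y : κ → R one has ∑_{i∈Fin k} ∑_{j∈κ} (x i + y j)^n = k · p_n(y) + (−1)^{k+1} · k · (n choose k) · v · p_{n−k}(y), where p_m(y) = ∑_{j∈κ} (y j)^m. (Note that k · (n choose k) = n!/((k−1)!(n−k)!).) -/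
import Mathlib


/-- The `m`-th elementary symmetric function of a finite family `x : ι → R`:
`e_m(x) = ∑_{S ⊆ ι, |S| = m} ∏_{i ∈ S} x i`. -/
def esymmFun {R : Type*} [CommRing R] {ι : Type*} [Fintype ι] [DecidableEq ι]
    (x : ι → R) (m : ℕ) : R :=
  ∑ S ∈ Finset.univ.powersetCard m, ∏ i ∈ S, x i

open Finset MvPolynomial

/-- Symmetric-function identity underlying the paper's formula
`s_n(E ⊗ F) = s_n(F) + ((-1)^(k+1) n!/((k-1)!(n-k)!)) · v · s_{n-k}(F)` (up to the summand
`k · p_n(y)` versus `p_n(y)`, corresponding to `E` versus the virtual bundle `E - (k-1)`):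
if `x : Fin k → R` has `e_i(x) = 0` for `1 ≤ i ≤ k - 1` and power sums `p_m(x) = 0` for
`k < m ≤ n`, then with `v = e_k(x) = ∏ i, x i` one has, for every finite family `y : κ → R`,
`∑ i, ∑ j, (x i + y j)^n = k · p_n(y) + (-1)^(k+1) · k · (n choose k) · v · p_{n-k}(y)`. -/
theorem sum_sum_add_pow_eq_of_esymm_eq_zero
    {R : Type*} [CommRing R] {κ : Type*} [Fintype κ]
    (k n : ℕ) (hk : 1 ≤ k) (hn : k ≤ n)
    (x : Fin k → R)
    (he : ∀ i, 1 ≤ i → i ≤ k - 1 → esymmFun x i = 0)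
    (hp : ∀ m, k < m → m ≤ n → ∑ i, (x i) ^ m = 0)
    (y : κ → R) :
    ∑ i, ∑ j, (x i + y j) ^ n =
      (k : R) * (∑ j, (y j) ^ n) +
        (-1) ^ (k + 1) * (k : R) * (n.choose k : R) * (∏ i, x i) * (∑ j, (y j) ^ (n - k)) := by
  classical
  set P : ℕ → R := fun m => ∑ i, (x i) ^ m with hPdef
  have hEeval : ∀ m, eval x (esymm (Fin k) R m) = esymmFun x m := by
    intro m
    simp [esymm, esymmFun, eval_sum, eval_prod]
  have hPeval : ∀ m, eval x (psum (Fin k) R m) = P m := by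
    intro m
    simp [psum, eval_sum, hPdef]
  have newton : ∀ m, 0 < m → P m = (-1) ^ (m + 1) * m * esymmFun x m -
      ∑ a ∈ antidiagonal m with a.1 ∈ Set.Ioo 0 m,
        (-1) ^ a.1 * esymmFun x a.1 * P a.2 := by
    intro m hm
    have := congrArg (eval x) (psum_eq_mul_esymm_sub_sum (Fin k) R m hm)
    simpa [eval_sum, hEeval, hPeval] using this
  have hsumzero : ∀ m, 0 < m → m ≤ k →
      ∑ a ∈ antidiagonal m with a.1 ∈ Set.Ioo 0 m,
        (-1) ^ a.1 * esymmFun x a.1 * P a.2 = 0 := by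
    intro m _ hmk
    refine Finset.sum_eq_zero fun a ha => ?_
    simp only [mem_filter, Set.mem_Ioo] at ha
    rw [he a.1 ha.2.1 (by omega), mul_zero, zero_mul]
  have hPlow : ∀ m, 1 ≤ m → m < k → P m = 0 := by
    intro m h1 h2
    rw [newton m h1, hsumzero m h1 (le_of_lt h2), he m h1 (by omega)]
    ring
  have hEk : esymmFun x k = ∏ i, x i := by
    have h1 : (univ : Finset (Fin k)).powersetCard k = {univ} := by
      have := Finset.powersetCard_self (univ : Finset (Fin k))
      simpa using this
    simp [esymmFun, h1]
  have hPk : P k = (-1) ^ (k + 1) * (k : R) * ∏ i, x i := by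
    rw [newton k hk, hsumzero k hk le_rfl, hEk]
    ring
  have key : ∑ i, ∑ j, (x i + y j) ^ n
      = ∑ m ∈ Finset.range (n + 1),
          P m * (∑ j, (y j) ^ (n - m)) * (n.choose m : R) := by
    have step1 : ∀ i : Fin k, ∑ j, (x i + y j) ^ n
        = ∑ m ∈ Finset.range (n + 1), ∑ j, x i ^ m * (y j) ^ (n - m) * (n.choose m : R) := by
      intro i
      rw [Finset.sum_comm]
      refine Finset.sum_congr rfl fun j _ => ?_
      rw [add_pow]
    simp_rw [step1]
    rw [Finset.sum_comm]
    refine Finset.sum_congr rfl fun m _ => ?_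
    rw [hPdef, Finset.sum_mul, Finset.sum_mul]
    exact Finset.sum_congr rfl fun i _ => by rw [Finset.mul_sum, Finset.sum_mul]
  rw [key]
  have hsub : ({0, k} : Finset ℕ) ⊆ Finset.range (n + 1) := by
    intro m hm
    simp only [Finset.mem_insert, Finset.mem_singleton] at hm
    rcases hm with rfl | rfl <;> exact Finset.mem_range.mpr (by omega)
  rw [← Finset.sum_subset hsub]
  · rw [Finset.sum_pair (by omega : (0 : ℕ) ≠ k)]
    have hP0 : P 0 = (k : R) := by simp [hPdef]
    rw [hP0, hPk]
    simp only [Nat.sub_zero, Nat.choose_zero_right, Nat.cast_one, Nat.choose_self]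
    ring
  · intro m hm hmn
    simp only [Finset.mem_insert, Finset.mem_singleton, not_or] at hmn
    have hPm : P m = 0 := by
      rcases lt_or_ge m k with h | h
      · exact hPlow m (by omega) h
      · exact hp m (by omega) (by simp at hm; omega)
    rw [hPm, zero_mul, zero_mul]
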